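/- arXiv:2005.07054 — 2 statements merged into one kernel-verified Lean document; each statement's English description precedes it below -/
import Mathlib

section
/- The plane quartic curve over F_2 defined by x³y + x²y² + xz³ + x²z² + y³z + yz³ = 0 is smooth and passes through all 7 rational points of P²(F_2). -/
open MvPolynomial

/-- Dickson's plane quartic `x³y + x²y² + xz³ + x²z² + y³z + yz³ = 0` over `F₂`. -/
noncomputable def dicksonQuartic : MvPolynomial (Fin 3) (ZMod 2) :=
  X 0 ^ 3 * X 1 + X 0 ^ 2 * X 1 ^ 2 + X 0 * X 2 ^ 3 + X 0 ^ 2 * X 2 ^ 2 +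
    X 1 ^ 3 * X 2 + X 1 * X 2 ^ 3

set_option maxHeartbeats 1000000 in
/-- Dickson's quartic is smooth (no singular point over the algebraic closure)
and passes through all 7 rational points of `ℙ²(F₂)`. -/
theorem stmt_3 :
    (¬ ∃ p : Fin 3 → AlgebraicClosure (ZMod 2), p ≠ 0 ∧
      aeval p dicksonQuartic = 0 ∧ ∀ i, aeval p (pderiv i dicksonQuartic) = 0) ∧
    ∀ p : Fin 3 → ZMod 2, p ≠ 0 → eval p dicksonQuartic = 0 := by
  constructor
  · rintro ⟨p, hp, h0, hd⟩
    have htwo : (2 : AlgebraicClosure (ZMod 2)) = 0 := by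
      exact_mod_cast CharP.cast_eq_zero (AlgebraicClosure (ZMod 2)) 2
    have h1 := hd 0
    have h2 := hd 1
    have h3 := hd 2
    simp [dicksonQuartic, pderiv_X] at h0 h1 h2 h3
    ring_nf at h0 h1 h2 h3
    set x := p 0 with hxdef
    set y := p 1 with hydef
    set z := p 2 with hzdef
    have hx6 : x ^ 6 = 0 := by
      linear_combination (y*z)*h0 + (z^3+y^2*z+x*y*z)*h1 + (z^3+y^2*z+x^3)*h2 +
        (-1*z^6 + -3*y^2*z^4 + -2*y^4*z^2 + -1*x*z^5 + -1*x*y*z^4 + -2*x*y^2*z^3 +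
         -1*x*y^4*z + -4*x^2*y*z^3 + -4*x^2*y^3*z + -1*x^3*z^3 + -4*x^3*y^2*z +
         -1*x^5*y)*htwo
    have hy6 : y ^ 6 = 0 := by
      linear_combination (y*z+y^2+x*z+x^2)*h0 +
        (z^3+y*z^2+y^3+x*z^2+x^2*z+x^2*y+x^3)*h1 + (z^3+y*z^2+y^3+x*z^2)*h2 +
        (y^3)*h3 +
        (-1*z^6 + -1*y*z^5 + -2*y^2*z^4 + -3*y^3*z^3 + -2*y^4*z^2 + -2*y^5*z +
         -2*x*z^5 + -2*x*y*z^4 + -3*x*y^2*z^3 + -4*x*y^3*z^2 + -1*x*y^5 +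
         -2*x^2*z^4 + -4*x^2*y*z^3 + -4*x^2*y^2*z^2 + -2*x^2*y^3*z + -3*x^2*y^4 +
         -3*x^3*z^3 + -4*x^3*y*z^2 + -2*x^3*y^2*z + -2*x^3*y^3 + -2*x^4*z^2 +
         -2*x^4*y*z + -3*x^4*y^2 + -2*x^5*y)*htwo
    have hz6 : z ^ 6 = 0 := by
      linear_combination (y^2+x*y)*h0 + (z^3+y*z^2+y^3+x*y^2)*h1 +
        (y*z^2+y^3+x*y^2)*h2 +
        (-1*y*z^5 + -3*y^3*z^3 + -2*y^5*z + -1*x*z^5 + -1*x*y*z^4 + -3*x*y^2*z^3 +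
         -2*x*y^3*z^2 + -2*x*y^4*z + -1*x*y^5 + -2*x^2*y*z^3 + -4*x^2*y^2*z^2 +
         -4*x^2*y^4 + -1*x^3*y*z^2 + -4*x^3*y^3 + -1*x^4*y^2)*htwo
    have hx : x = 0 := pow_eq_zero_iff (by norm_num : (6:ℕ) ≠ 0) |>.mp hx6
    have hy : y = 0 := pow_eq_zero_iff (by norm_num : (6:ℕ) ≠ 0) |>.mp hy6
    have hz : z = 0 := pow_eq_zero_iff (by norm_num : (6:ℕ) ≠ 0) |>.mp hz6
    apply hp
    funext i
    fin_cases i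
    · exact hx
    · exact hy
    · exact hz
  · intro p _
    have key : ∀ a b c : ZMod 2,
        a^3*b + a^2*b^2 + a*c^3 + a^2*c^2 + b^3*c + b*c^3 = 0 := by decide
    have h := key (p 0) (p 1) (p 2)
    simp only [dicksonQuartic, eval_add, eval_mul, eval_pow, eval_X]
    linear_combination h
end

section
/- Let q be even and Q a quadratic form on V = F_q^n with V = U ⊕ S, where S is the maximal subspace of the radical of Q on which Q vanishes. An invertible linear map g of V preserves Q if and only if, in block form with respect to U ⊕ S, g = [[A, 0], [B, C]] where A is an isometry of Q restricted to U, B : U → S is an arbitrary linear map, and C ∈ GL(S). -/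
/-! `Q` is unchanged by adding a vector of its radical `S`, and an isometry maps `S` onto itself.
Hence `g` is block lower triangular with respect to `U ⊕ S`, its `U`-block being the map induced
on `V ⧸ S ≃ U`; that block is an isometry because `Q (A u) = Q (A u + B u) = Q (g u)`. -/

namespace QuadraticMap

variable {R M N : Type*} [CommRing R] [AddCommGroup M] [Module R M] [AddCommGroup N] [Module R N]
  {Q : QuadraticMap R M N}

theorem mem_radical_iff_polar {x : M} :
    x ∈ Q.radical ↔ (∀ y, polar Q x y = 0) ∧ Q x = 0 := by
  simp [radical, LinearMap.ext_iff, and_comm]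

theorem map_add_of_mem_radical {s : M} (hs : s ∈ Q.radical) (x : M) : Q (x + s) = Q x := by
  rw [add_comm]
  exact (mem_radical_iff'.1 hs).2 x

end QuadraticMap

namespace Submodule

variable {R M : Type*} [Ring R] [AddCommGroup M] [Module R M] {U S : Submodule R M}

-- `A` is the map induced by `g` on `M ⧸ S ≃ U`, which makes it invertible.
theorem exists_blockLowerTriangular_of_map_eq_self (h : IsCompl U S) (g : M ≃ₗ[R] M)
    (hg : S.map (g : M →ₗ[R] M) = S) :
    ∃ (A : U ≃ₗ[R] U) (B : U →ₗ[R] S) (C : S ≃ₗ[R] S),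
      (∀ u : U, g u = (A u : M) + (B u : M)) ∧ ∀ s : S, g s = (C s : M) := by
  let e := S.quotientEquivOfIsCompl U h.symm
  refine ⟨e.symm.trans ((Quotient.equiv S S g hg).trans e),
    S.projectionOnto U h.symm ∘ₗ g.toLinearMap ∘ₗ U.subtype, g.ofSubmodules S S hg,
    fun u => ?_, fun s => rfl⟩
  have := projection_add_projection_eq_self h (g u)
  simpa [e, ← toLinearMap_symm_quotientEquivOfIsCompl] using this.symm

end Submodule

open QuadraticMap Submodule

theorem stmt_15_general (Fq : Type) [Field Fq] (n : ℕ)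
    (Q : QuadraticForm Fq (Fin n → Fq))
    (U S : Submodule Fq (Fin n → Fq)) (hUS : IsCompl U S)
    (hS : ∀ x, x ∈ S ↔ (∀ y, QuadraticMap.polar Q x y = 0) ∧ Q x = 0)
    (g : (Fin n → Fq) ≃ₗ[Fq] (Fin n → Fq)) :
    (∀ x, Q (g x) = Q x) ↔
      ∃ (A : U ≃ₗ[Fq] U) (B : U →ₗ[Fq] S) (C : S ≃ₗ[Fq] S),
        (∀ u : U, Q (A u) = Q u) ∧
        (∀ u : U, g u = (A u : Fin n → Fq) + (B u : Fin n → Fq)) ∧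
        (∀ s : S, g s = (C s : Fin n → Fq)) := by
  obtain rfl : S = Q.radical := SetLike.ext fun x => (hS x).trans mem_radical_iff_polar.symm
  constructor
  · intro hg
    obtain ⟨A, B, C, hAB, hC⟩ :=
      exists_blockLowerTriangular_of_map_eq_self hUS g (IsometryEquiv.map_radical ⟨g, hg⟩)
    refine ⟨A, B, C, fun u => ?_, hAB, hC⟩
    rw [← map_add_of_mem_radical (B u).2, ← hAB, hg]
  · rintro ⟨A, B, C, hA, hAB, hC⟩ x
    obtain ⟨u, s, rfl, -⟩ := existsUnique_add_of_isCompl hUS x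
    rw [map_add, hAB, hC, add_assoc, map_add_of_mem_radical (add_mem (B u).2 (C s).2), hA,
      map_add_of_mem_radical s.2]

/-- Block decomposition of isometries: let `q` be even and `Q` a quadratic form
on `V = F_q^n` with `V = U ⊕ S`, where `S` is the maximal subspace of the
radical of (the polar form of) `Q` on which `Q` vanishes. An invertible linear
map `g` of `V` preserves `Q` if and only if, in block form, `g = [[A,0],[B,C]]`
with `A` an isometry of `Q|U`, `B : U → S` an arbitrary linear map, and
`C ∈ GL(S)`. -/
theorem stmt_15 (Fq : Type) [Field Fq] [Fintype Fq] [CharP Fq 2] (n : ℕ)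
    (Q : QuadraticForm Fq (Fin n → Fq))
    (U S : Submodule Fq (Fin n → Fq)) (hUS : IsCompl U S)
    (hS : ∀ x, x ∈ S ↔ (∀ y, QuadraticMap.polar Q x y = 0) ∧ Q x = 0)
    (g : (Fin n → Fq) ≃ₗ[Fq] (Fin n → Fq)) :
    (∀ x, Q (g x) = Q x) ↔
      ∃ (A : U ≃ₗ[Fq] U) (B : U →ₗ[Fq] S) (C : S ≃ₗ[Fq] S),
        (∀ u : U, Q (A u) = Q u) ∧
        (∀ u : U, g u = (A u : Fin n → Fq) + (B u : Fin n → Fq)) ∧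
        (∀ s : S, g s = (C s : Fin n → Fq)) :=
  stmt_15_general Fq n Q U S hUS hS g
end
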